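/- Let α > −1/2 be real and let P^{(∞)}_α(z) = [[1,0],[2αi,1]] · diag((z+1)^{−1/4}, (z+1)^{1/4}) · V · diag(w(z)^{−α}, w(z)^{α}) on ℂ∖(−∞,0], with w(z) = ((z+1)^{1/2}+1)/((z+1)^{1/2}−1), V = (1/√2)[[1,i],[i,1]], and principal branches of all powers. Then the limit lim_{z→0, z∉(−∞,0]} z · (d/dz P^{(∞)}_α(z)) · (P^{(∞)}_α(z))^{−1} exists and equals −iα · [[−2αi, 1],[−1 + 4α², 2αi]]. -/

import Mathlib

open Complex Matrix Filter Topology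

/-- `V = (1/√2)[[1, i], [i, 1]]`. -/
noncomputable def Vmat : Matrix (Fin 2) (Fin 2) ℂ :=
  ((Real.sqrt 2 : ℂ))⁻¹ • !![1, I; I, 1]

/-- `w(z) = ((z+1)^{1/2}+1)/((z+1)^{1/2}−1)`, principal branch. -/
noncomputable def wFun (z : ℂ) : ℂ :=
  ((z + 1) ^ ((1 : ℂ) / 2) + 1) / ((z + 1) ^ ((1 : ℂ) / 2) - 1)

/-- The global parametrix `P^{(∞)}_α`. -/
noncomputable def Pinf (α : ℝ) (z : ℂ) : Matrix (Fin 2) (Fin 2) ℂ :=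
  !![1, 0; 2 * (α : ℂ) * I, 1] *
  !![(z + 1) ^ (-(1 : ℂ) / 4), 0; 0, (z + 1) ^ ((1 : ℂ) / 4)] *
  Vmat *
  !![wFun z ^ (-(α : ℂ)), 0; 0, wFun z ^ ((α : ℂ))]

/-- The entrywise complex derivative of `P^{(∞)}_α`. -/
noncomputable def Pinf' (α : ℝ) (z : ℂ) : Matrix (Fin 2) (Fin 2) ℂ :=
  Matrix.of fun j k => deriv (fun w => Pinf α w j k) z

/-!
Write `P = L D(z) V W(z)` with constant `L = [[1,0],[2αi,1]]`, `V`, and diagonal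
`D = diag((z+1)^{-1/4}, (z+1)^{1/4})`, `W = diag(w^{-α}, w^{α})`. Then
`P' P⁻¹ = L (D' D⁻¹ + D V (W' W⁻¹) V⁻¹ D⁻¹) L⁻¹`. Here `D' D⁻¹ = diag(∓1/4) / (z+1)` is regular
at `0`, while `w'/w = -1/(z (z+1)^{1/2})` has a simple pole, so `z W' W⁻¹ = α (z+1)^{-1/2} σ₃`.
Hence `z P' P⁻¹` extends continuously to `z = 0`, with value `α L V σ₃ V⁻¹ L⁻¹`.
-/

section LogDerivative

variable {n : Type*} [Fintype n] [DecidableEq n]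

theorem of_deriv_mul_diagonal_mul_diagonal {𝕜 : Type*} [NontriviallyNormedField 𝕜]
    (L M : Matrix n n 𝕜) {a b : n → 𝕜 → 𝕜} {a' b' : n → 𝕜} {z : 𝕜}
    (ha : ∀ i, HasDerivAt (a i) (a' i) z) (hb : ∀ i, HasDerivAt (b i) (b' i) z) :
    (of fun j k => deriv (fun y =>
        (L * diagonal (fun i => a i y) * M * diagonal (fun i => b i y)) j k) z) =
      L * diagonal a' * M * diagonal (fun i => b i z) +
        L * diagonal (fun i => a i z) * M * diagonal b' := by
  ext j k
  have hentry (d : n → 𝕜) : (L * diagonal d * M) j k = ∑ i, L j i * d i * M i k := by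
    rw [Matrix.mul_apply]
    simp only [mul_diagonal]
  simp only [of_apply, Matrix.add_apply, mul_diagonal, hentry]
  have hsum : HasDerivAt (fun y => ∑ i, L j i * a i y * M i k) (∑ i, L j i * a' i * M i k) z :=
    HasDerivAt.fun_sum fun i _ => ((ha i).const_mul (L j i)).mul_const (M i k)
  exact (hsum.fun_mul (hb k)).deriv

variable {K : Type*} [Field K]

theorem inv_diagonal_of_ne_zero {d : n → K} (hd : ∀ i, d i ≠ 0) :
    (diagonal d)⁻¹ = diagonal fun i => (d i)⁻¹ :=
  inv_eq_left_inv <| by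
    rw [diagonal_mul_diagonal, ← diagonal_one]
    exact congrArg diagonal (funext fun i => inv_mul_cancel₀ (hd i))

theorem diagonal_mul_mul_diagonal_inv {d : n → K} (hd : ∀ i, d i ≠ 0) (ℓ : n → K) :
    diagonal (fun i => ℓ i * d i) * diagonal (fun i => (d i)⁻¹) = diagonal ℓ := by
  rw [diagonal_mul_diagonal]
  exact congrArg diagonal (funext fun i => mul_inv_cancel_right₀ (hd i) (ℓ i))

theorem mul_diagonal_mul_diagonal_logDeriv (L M : Matrix n n K) (hM : IsUnit M.det)
    {a b : n → K} (ha : ∀ i, a i ≠ 0) (hb : ∀ i, b i ≠ 0) (ℓa ℓb : n → K) :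
    (L * diagonal (fun i => ℓa i * a i) * M * diagonal b +
        L * diagonal a * M * diagonal (fun i => ℓb i * b i)) *
        (L * diagonal a * M * diagonal b)⁻¹ =
      L * (diagonal ℓa + diagonal a * M * diagonal ℓb * M⁻¹ * diagonal (fun i => (a i)⁻¹)) *
        L⁻¹ := by
  have hbℓ (ℓ : n → K) (X : Matrix n n K) :
      diagonal (fun i => ℓ i * b i) * (diagonal (fun i => (b i)⁻¹) * X) = diagonal ℓ * X := by
    rw [← Matrix.mul_assoc, diagonal_mul_mul_diagonal_inv hb]
  have hb₁ (X : Matrix n n K) : diagonal b * (diagonal (fun i => (b i)⁻¹) * X) = X := by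
    simpa using hbℓ 1 X
  have haℓ (X : Matrix n n K) :
      diagonal (fun i => ℓa i * a i) * (M * (M⁻¹ * (diagonal (fun i => (a i)⁻¹) * X))) =
        diagonal ℓa * X := by
    rw [← Matrix.mul_assoc M, mul_nonsing_inv M hM, Matrix.one_mul, ← Matrix.mul_assoc,
      diagonal_mul_mul_diagonal_inv ha]
  simp only [Matrix.mul_inv_rev, inv_diagonal_of_ne_zero ha, inv_diagonal_of_ne_zero hb,
    Matrix.mul_add, Matrix.add_mul, Matrix.mul_assoc, hb₁, hbℓ, haℓ]

end LogDerivative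

@[fun_prop]
theorem ContinuousAt.matrix_diagonal {X R n : Type*} [TopologicalSpace X] [TopologicalSpace R]
    [Zero R] [DecidableEq n] {v : X → n → R} {x : X} (hv : ContinuousAt v x) :
    ContinuousAt (fun x => diagonal (v x)) x :=
  continuous_id.matrix_diagonal.continuousAt.comp hv

namespace Complex

theorem setOf_not_im_eq_zero_and_re_nonpos : {z : ℂ | ¬(z.im = 0 ∧ z.re ≤ 0)} = slitPlane := by
  ext z
  change ¬(z.im = 0 ∧ z.re ≤ 0) ↔ z ∈ slitPlane
  rw [mem_slitPlane_iff, not_and_or, not_le]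
  tauto

theorem add_one_mem_slitPlane {z : ℂ} (hz : z ∈ slitPlane) : z + 1 ∈ slitPlane := by
  rw [mem_slitPlane_iff] at hz ⊢
  simp only [add_re, one_re, add_im, one_im, add_zero]
  rcases hz with hre | him
  · exact Or.inl (by linarith)
  · exact Or.inr him

theorem add_one_div_sub_one_mem_slitPlane {c : ℂ} (h : c ^ 2 - 1 ∈ slitPlane) :
    (c + 1) / (c - 1) ∈ slitPlane := by
  have hc : c - 1 ≠ 0 := fun hc => slitPlane_ne_zero h (by linear_combination (c + 1) * hc)
  set w := (c + 1) / (c - 1) with hw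
  -- if `w` were a nonpositive real, then so would be `c ^ 2 - 1`
  have key : c ^ 2 - 1 = 4 * w / (w - 1) ^ 2 := by
    rw [hw]
    field_simp
    ring
  by_contra hw_not
  rw [mem_slitPlane_iff, not_or, not_lt, not_ne_iff] at hw_not
  have hw_real : w = (w.re : ℂ) := by
    conv_lhs => rw [← re_add_im w, hw_not.2, ofReal_zero, zero_mul, add_zero]
  rw [key, hw_real] at h
  norm_cast at h
  rw [ofReal_mem_slitPlane] at h
  exact h.not_ge (div_nonpos_of_nonpos_of_nonneg (by linarith [hw_not.1]) (sq_nonneg _))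

theorem _root_.HasDerivAt.cpow_const_mul_self {f : ℂ → ℂ} {f' x : ℂ} (c : ℂ)
    (hf : HasDerivAt f f' x) (hx : f x ∈ slitPlane) :
    HasDerivAt (fun y => f y ^ c) (c * (f' / f x) * f x ^ c) x := by
  convert hf.cpow_const hx using 1
  rw [cpow_sub _ _ (slitPlane_ne_zero hx), cpow_one]
  ring

theorem cpow_one_half_sq (x : ℂ) : (x ^ ((1 : ℂ) / 2)) ^ 2 = x := by
  rw [one_div]
  exact cpow_ofNat_inv_pow x 2

theorem hasDerivAt_add_one_cpow {z : ℂ} (hz : z + 1 ∈ slitPlane) (s : ℂ) :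
    HasDerivAt (fun y => (y + 1) ^ s) (s / (z + 1) * (z + 1) ^ s) z := by
  convert ((hasDerivAt_id' z).add_const 1).cpow_const_mul_self s hz using 1
  ring

end Complex

theorem wFun_mem_slitPlane {z : ℂ} (hz : z ∈ slitPlane) : wFun z ∈ slitPlane := by
  rw [wFun]
  apply add_one_div_sub_one_mem_slitPlane
  rwa [cpow_one_half_sq, add_sub_cancel_right]

-- with `c = (z+1)^{1/2}`: `c' = 1/(2c)` and `c² - 1 = z` give `w'/w = -1/(c z)`
theorem hasDerivAt_wFun {z : ℂ} (hz : z ∈ slitPlane) :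
    HasDerivAt wFun (-wFun z / ((z + 1) ^ ((1 : ℂ) / 2) * z)) z := by
  set c := (z + 1) ^ ((1 : ℂ) / 2) with hc_def
  have hcc : c ^ 2 = z + 1 := cpow_one_half_sq (z + 1)
  have hz0 : z ≠ 0 := slitPlane_ne_zero hz
  have hz1 : z + 1 ≠ 0 := slitPlane_ne_zero (add_one_mem_slitPlane hz)
  have hc0 : c ≠ 0 := fun h => hz1 (by linear_combination -hcc + c * h)
  have hc1 : c - 1 ≠ 0 := fun h => hz0 (by linear_combination -hcc + (c + 1) * h)
  have hdc := hasDerivAt_add_one_cpow (add_one_mem_slitPlane hz) ((1 : ℂ) / 2)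
  refine ((hdc.add_const 1).div (hdc.sub_const 1) hc1).congr_deriv ?_
  rw [wFun, ← hc_def]
  field_simp
  linear_combination 2 * hcc

noncomputable def shearMat (α : ℝ) : Matrix (Fin 2) (Fin 2) ℂ := !![1, 0; 2 * (α : ℂ) * I, 1]

noncomputable def rootExps : Fin 2 → ℂ := ![-(1 : ℂ) / 4, (1 : ℂ) / 4]

noncomputable def wExps (α : ℝ) : Fin 2 → ℂ := ![-(α : ℂ), (α : ℂ)]

theorem Pinf_eq_mul_diagonal (α : ℝ) (z : ℂ) :
    Pinf α z = shearMat α * diagonal (fun i => (z + 1) ^ rootExps i) * Vmat *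
      diagonal (fun i => wFun z ^ wExps α i) := by
  rw [diagonal_fin_two, diagonal_fin_two]
  rfl

theorem shearMat_mul_inv (α : ℝ) : shearMat α * !![1, 0; -(2 * (α : ℂ) * I), 1] = 1 := by
  rw [shearMat, mul_fin_two, one_fin_two]
  simp

theorem inv_sqrt_two_mul_self : ((Real.sqrt 2 : ℂ))⁻¹ * ((Real.sqrt 2 : ℂ))⁻¹ = 2⁻¹ := by
  rw [← mul_inv, ← ofReal_mul, Real.mul_self_sqrt zero_le_two, ofReal_ofNat]

theorem Vmat_mul_inv : Vmat * ((Real.sqrt 2 : ℂ)⁻¹ • !![1, -I; -I, 1]) = 1 := by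
  rw [Vmat, Matrix.smul_mul, Matrix.mul_smul, smul_smul, inv_sqrt_two_mul_self, mul_fin_two,
    one_fin_two]
  ext i j
  fin_cases i <;> fin_cases j <;> simp <;> ring_nf

theorem Pinf'_mul_inv_eq (α : ℝ) {z : ℂ} (hz : z ∈ slitPlane) :
    Pinf' α z * (Pinf α z)⁻¹ = shearMat α *
      (diagonal (fun i => rootExps i / (z + 1)) +
        diagonal (fun i => (z + 1) ^ rootExps i) * Vmat *
          diagonal (fun i => -wExps α i / ((z + 1) ^ ((1 : ℂ) / 2) * z)) * Vmat⁻¹ *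
          diagonal (fun i => ((z + 1) ^ rootExps i)⁻¹)) * (shearMat α)⁻¹ := by
  have hz1 : z + 1 ≠ 0 := slitPlane_ne_zero (add_one_mem_slitPlane hz)
  have hw0 : wFun z ≠ 0 := slitPlane_ne_zero (wFun_mem_slitPlane hz)
  have hroot (i : Fin 2) : HasDerivAt (fun y => (y + 1) ^ rootExps i)
      (rootExps i / (z + 1) * (z + 1) ^ rootExps i) z :=
    hasDerivAt_add_one_cpow (add_one_mem_slitPlane hz) _
  have hw (i : Fin 2) : HasDerivAt (fun y => wFun y ^ wExps α i)
      (-wExps α i / ((z + 1) ^ ((1 : ℂ) / 2) * z) * wFun z ^ wExps α i) z := by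
    convert (hasDerivAt_wFun hz).cpow_const_mul_self (wExps α i) (wFun_mem_slitPlane hz) using 2
    field_simp
  have hP' : Pinf' α z = of fun j k => deriv (fun y => (shearMat α *
      diagonal (fun i => (y + 1) ^ rootExps i) * Vmat *
        diagonal (fun i => wFun y ^ wExps α i)) j k) z := by
    simp only [Pinf', Pinf_eq_mul_diagonal]
  rw [hP', of_deriv_mul_diagonal_mul_diagonal _ _ hroot hw, Pinf_eq_mul_diagonal]
  exact mul_diagonal_mul_diagonal_logDeriv _ _ (isUnit_det_of_right_inverse Vmat_mul_inv)
    (fun _ => cpow_ne_zero_iff.2 (Or.inl hz1)) (fun _ => cpow_ne_zero_iff.2 (Or.inl hw0)) _ _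

/-- A closed form of `z P'(z) P(z)⁻¹` on the slit plane that is continuous at `0`. -/
noncomputable def scaledLogDerivPinf (α : ℝ) (z : ℂ) : Matrix (Fin 2) (Fin 2) ℂ :=
  shearMat α *
    (diagonal (fun i => z * rootExps i / (z + 1)) +
      diagonal (fun i => (z + 1) ^ rootExps i) * Vmat *
        diagonal (fun i => -wExps α i / (z + 1) ^ ((1 : ℂ) / 2)) * Vmat⁻¹ *
        diagonal (fun i => ((z + 1) ^ rootExps i)⁻¹)) * (shearMat α)⁻¹

theorem smul_Pinf'_mul_inv_eq (α : ℝ) {z : ℂ} (hz : z ∈ slitPlane) :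
    z • (Pinf' α z * (Pinf α z)⁻¹) = scaledLogDerivPinf α z := by
  have hz0 : z ≠ 0 := slitPlane_ne_zero hz
  have hroot : (fun i => z * rootExps i / (z + 1)) = z • fun i => rootExps i / (z + 1) := by
    funext i
    simp only [Pi.smul_apply, smul_eq_mul, mul_div_assoc]
  have hw : (fun i => -wExps α i / (z + 1) ^ ((1 : ℂ) / 2)) =
      z • fun i => -wExps α i / ((z + 1) ^ ((1 : ℂ) / 2) * z) := by
    funext i
    simp only [Pi.smul_apply, smul_eq_mul]
    field_simp
  rw [Pinf'_mul_inv_eq α hz, scaledLogDerivPinf, hroot, hw, diagonal_smul, diagonal_smul]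
  simp only [Matrix.mul_smul, Matrix.smul_mul, ← smul_add]

theorem continuousAt_scaledLogDerivPinf (α : ℝ) : ContinuousAt (scaledLogDerivPinf α) 0 := by
  unfold scaledLogDerivPinf
  fun_prop (disch := simp)

theorem scaledLogDerivPinf_zero (α : ℝ) :
    scaledLogDerivPinf α 0 = (-(I * (α : ℂ))) •
      !![-(2 : ℂ) * (α : ℂ) * I, 1; -1 + 4 * (α : ℂ) ^ 2, 2 * (α : ℂ) * I] := by
  simp only [scaledLogDerivPinf, zero_add, one_cpow, zero_mul, div_one, inv_one,
    diagonal_zero, diagonal_one, Matrix.one_mul, Matrix.mul_one]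
  rw [inv_eq_right_inv (shearMat_mul_inv α), inv_eq_right_inv Vmat_mul_inv, shearMat, Vmat,
    diagonal_fin_two]
  simp only [Matrix.smul_mul, Matrix.mul_smul, smul_smul, inv_sqrt_two_mul_self]
  ext i j
  fin_cases i <;> fin_cases j <;> simp [wExps] <;> ring_nf <;> simp [I_sq]
  ring

theorem stmt11_general (α : ℝ) :
    Tendsto (fun z : ℂ => z • (Pinf' α z * (Pinf α z)⁻¹))
      (𝓝[{z : ℂ | ¬(z.im = 0 ∧ z.re ≤ 0)}] 0)
      (𝓝 ((-(I * (α : ℂ))) •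
        !![-(2 : ℂ) * (α : ℂ) * I, 1; -1 + 4 * (α : ℂ) ^ 2, 2 * (α : ℂ) * I])) := by
  rw [setOf_not_im_eq_zero_and_re_nonpos, ← scaledLogDerivPinf_zero]
  refine ((continuousAt_scaledLogDerivPinf α).tendsto.mono_left nhdsWithin_le_nhds).congr' ?_
  filter_upwards [self_mem_nhdsWithin] with z hz
  exact (smul_Pinf'_mul_inv_eq α hz).symm

/-- `z (d/dz P^{(∞)}_α(z)) (P^{(∞)}_α(z))⁻¹ → −iα [[−2αi, 1], [−1+4α², 2αi]]`
as `z → 0` in `ℂ ∖ (−∞, 0]`. -/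
theorem stmt11 (α : ℝ) (hα : -1 / 2 < α) :
    Tendsto (fun z : ℂ => z • (Pinf' α z * (Pinf α z)⁻¹))
      (𝓝[{z : ℂ | ¬(z.im = 0 ∧ z.re ≤ 0)}] 0)
      (𝓝 ((-(I * (α : ℂ))) •
        !![-(2 : ℂ) * (α : ℂ) * I, 1; -1 + 4 * (α : ℂ) ^ 2, 2 * (α : ℂ) * I])) :=
  stmt11_general α
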